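/- (Convexity of vacancy numbers, type C_n^{(1)}.) Let ν be as in the context. Then for every 1 ≤ a ≤ n−1 and every integer i ≥ 1 with m_i(ν^{(a)}) = 0, one has 2·P_i^{(a)}(ν) ≥ P_{i−1}^{(a)}(ν) + P_{i+1}^{(a)}(ν); and for every even integer i ≥ 2 with m_i(ν^{(n)}) = 0, one has 2·P_i^{(n)}(ν) ≥ P_{i−2}^{(n)}(ν) + P_{i+2}^{(n)}(ν). -/
import Mathlib


/-!
STATEMENT 14: convexity of vacancy numbers, type C_n^{(1)}.
-/

namespace OSS

/-- `Q i τ = Σ_{t ∈ τ} min(t, i)`. -/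
def Q (i : ℚ) (τ : Multiset ℚ) : ℚ := (τ.map (fun t => min t i)).sum

/-- Vacancy numbers of type `C_n^{(1)}` (with `ν 0 = ∅` assumed). -/
def P (n L : ℕ) (ν : ℕ → Multiset ℚ) (a : ℕ) (i : ℚ) : ℚ :=
  if a = n then Q i (ν (n - 1)) - Q i (ν n)
  else
    Q i (ν (a - 1)) - 2 * Q i (ν a) + Q i (ν (a + 1))
      + (L : ℚ) * min i 1 * (if a = 1 then 1 else 0)

lemma min_concave (t i d : ℚ) (hd : 0 ≤ d) :
    min t (i - d) + min t (i + d) ≤ 2 * min t i := by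
  rcases le_total t i with h | h
  · have h2 : min t (i + d) = t := min_eq_left (by linarith)
    have h3 : min t i = t := min_eq_left h
    have h1 : min t (i - d) ≤ t := min_le_left _ _
    linarith
  · have h3 : min t i = i := min_eq_right h
    have h1 : min t (i - d) ≤ i - d := min_le_right _ _
    have h2 : min t (i + d) ≤ i + d := min_le_right _ _
    linarith

lemma min_gap (t i d : ℚ) (hd : 0 ≤ d) (h : t ≤ i - d ∨ i + d ≤ t) :
    min t (i - d) + min t (i + d) = 2 * min t i := by
  rcases h with h | h
  · rw [min_eq_left (by linarith), min_eq_left (by linarith),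
      min_eq_left (by linarith)]; ring
  · rw [min_eq_right (by linarith), min_eq_right (by linarith),
      min_eq_right (by linarith)]; ring

lemma Q_concave (τ : Multiset ℚ) (i d : ℚ) (hd : 0 ≤ d) :
    Q (i - d) τ + Q (i + d) τ ≤ 2 * Q i τ := by
  induction τ using Multiset.induction with
  | empty => simp [Q]
  | cons t s ih =>
    simp only [Q, Multiset.map_cons, Multiset.sum_cons] at *
    linarith [min_concave t i d hd]

lemma Q_gap (τ : Multiset ℚ) (i d : ℚ) (hd : 0 ≤ d)
    (h : ∀ t ∈ τ, t ≤ i - d ∨ i + d ≤ t) :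
    Q (i - d) τ + Q (i + d) τ = 2 * Q i τ := by
  induction τ using Multiset.induction with
  | empty => simp [Q]
  | cons t s ih =>
    simp only [Q, Multiset.map_cons, Multiset.sum_cons] at *
    have := min_gap t i d hd (h t (Multiset.mem_cons_self t s))
    have := ih (fun u hu => h u (Multiset.mem_cons_of_mem hu))
    linarith

theorem vacancy_convex_C (n L : ℕ) (hn : 2 ≤ n) (lam : ℕ → ℤ) (ν : ℕ → Multiset ℚ)
    (hν0 : ν 0 = 0)
    (hparts : ∀ a, 1 ≤ a → a ≤ n - 1 → ∀ t ∈ ν a, ∃ k : ℤ, 0 < k ∧ t = (k : ℚ))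
    (hpartsn : ∀ t ∈ ν n, ∃ k : ℤ, 0 < k ∧ t = 2 * (k : ℚ))
    (hsize : ∀ a, 1 ≤ a → a ≤ n →
      (ν a).sum = (L : ℚ) - ∑ b ∈ Finset.Icc 1 a, (lam b : ℚ))
    :
    (∀ a, 1 ≤ a → a ≤ n - 1 → ∀ i : ℤ, 1 ≤ i → (ν a).count (i : ℚ) = 0 →
      P n L ν a ((i : ℚ) - 1) + P n L ν a ((i : ℚ) + 1) ≤ 2 * P n L ν a (i : ℚ)) ∧
    (∀ i : ℤ, 2 ≤ i → Even i → (ν n).count (i : ℚ) = 0 →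
      P n L ν n ((i : ℚ) - 2) + P n L ν n ((i : ℚ) + 2) ≤ 2 * P n L ν n (i : ℚ)) := by
  constructor
  · intro a ha1 ha2 i hi hcount
    have han : a ≠ n := by omega
    have hnot : (i : ℚ) ∉ ν a := Multiset.count_eq_zero.mp hcount
    have hgap : ∀ t ∈ ν a, t ≤ (i : ℚ) - 1 ∨ (i : ℚ) + 1 ≤ t := by
      intro t ht
      obtain ⟨k, hk, rfl⟩ := hparts a ha1 ha2 t ht
      have hki : k ≠ i := by
        rintro rfl; exact hnot ht
      have : k ≤ i - 1 ∨ i + 1 ≤ k := by omega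
      rcases this with h | h
      · left; push_cast; exact_mod_cast by exact_mod_cast (by exact_mod_cast h : (k:ℚ) ≤ ((i-1:ℤ):ℚ))
      · right; exact_mod_cast (by exact_mod_cast h : ((i+1:ℤ):ℚ) ≤ (k:ℚ))
    have h1 := Q_concave (ν (a - 1)) (i : ℚ) 1 (by norm_num)
    have h2 := Q_concave (ν (a + 1)) (i : ℚ) 1 (by norm_num)
    have h3 := Q_gap (ν a) (i : ℚ) 1 (by norm_num) hgap
    have hm : min ((i:ℚ) - 1) 1 + min ((i:ℚ) + 1) 1 ≤ 2 * min (i:ℚ) 1 := by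
      have := min_concave 1 (i : ℚ) 1 (by norm_num)
      rw [min_comm ((i:ℚ)-1) 1, min_comm ((i:ℚ)+1) 1, min_comm (i:ℚ) 1]
      linarith
    have hL : (0:ℚ) ≤ (L:ℚ) := Nat.cast_nonneg L
    have h4 : (L:ℚ) * min ((i:ℚ)-1) 1 * (if a = 1 then (1:ℚ) else 0)
        + (L:ℚ) * min ((i:ℚ)+1) 1 * (if a = 1 then (1:ℚ) else 0)
        ≤ 2 * ((L:ℚ) * min (i:ℚ) 1 * (if a = 1 then (1:ℚ) else 0)) := by
      split_ifs with h
      · simp only [mul_one]; nlinarith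
      · simp
    simp only [P, if_neg han]
    linarith
  · intro i hi hev hcount
    have hnot : (i : ℚ) ∉ ν n := Multiset.count_eq_zero.mp hcount
    obtain ⟨m, hm⟩ := hev
    have hgap : ∀ t ∈ ν n, t ≤ (i : ℚ) - 2 ∨ (i : ℚ) + 2 ≤ t := by
      intro t ht
      obtain ⟨k, hk, rfl⟩ := hpartsn t ht
      have hki : 2 * k ≠ i := by
        intro h
        apply hnot
        have : (2 * (k:ℚ)) = (i:ℚ) := by exact_mod_cast congrArg (Int.cast : ℤ → ℚ) h
        rwa [← this]
      have : 2 * k ≤ i - 2 ∨ i + 2 ≤ 2 * k := by omega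
      rcases this with h | h
      · left
        have : ((2*k:ℤ):ℚ) ≤ ((i-2:ℤ):ℚ) := by exact_mod_cast h
        push_cast at this; linarith
      · right
        have : ((i+2:ℤ):ℚ) ≤ ((2*k:ℤ):ℚ) := by exact_mod_cast h
        push_cast at this; linarith
    have h1 := Q_concave (ν (n - 1)) (i : ℚ) 2 (by norm_num)
    have h3 := Q_gap (ν n) (i : ℚ) 2 (by norm_num) hgap
    simp only [P, if_pos rfl, if_true]
    linarith

end OSS
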